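/- arXiv:2406.09883 — 3 statements merged into one kernel-verified Lean document; each statement's English description precedes it below -/
import Mathlib

section
/- (Hopf–Rinow) If (X,d) is a complete, locally compact length space, then X is a geodesic space: any two points are joined by a geodesic. -/
open Set

/-- The length metric associated with `d`: infimum of lengths of rectifiable curves. -/
noncomputable def lengthMetric {X : Type*} [MetricSpace X] (x y : X) : ENNReal :=
  ⨅ σ : {σ : ℝ → X // ContinuousOn σ (Set.Icc 0 1) ∧ σ 0 = x ∧ σ 1 = y ∧
      eVariationOn σ (Set.Icc 0 1) ≠ ⊤},
    eVariationOn σ.1 (Set.Icc 0 1)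

/-!
In a length space every point of `closedBall x (r + δ)` lies within `δ` of `closedBall x r`.
Hence compactness of the balls about `x` passes to larger radii, since a compact set in a locally
compact space has a compact closed thickening, and to limits of radii, since a complete totally
bounded set is compact; so all closed balls are compact. In such a proper space, a point of the
sphere of radius `dist a c / 2` about `a` minimizing the distance to `c` is an exact midpoint.
Finally (Menger), iterating midpoints gives points at all dyadic parameters, which are
`dist x y`-Lipschitz in the parameter; their step functions converge in the complete space to a
`dist x y`-Lipschitz curve from `x` to `y`, and such a curve is a geodesic by the triangle
inequality.
-/

open Metric Filter Topology

theorem edist_add_edist_le_eVariationOn {α E : Type*} [LinearOrder α] [PseudoEMetricSpace E]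
    (f : α → E) {a s b : α} (has : a ≤ s) (hsb : s ≤ b) :
    edist (f a) (f s) + edist (f s) (f b) ≤ eVariationOn f (Icc a b) := by
  have hs : s ∈ Icc a b := ⟨has, hsb⟩
  calc edist (f a) (f s) + edist (f s) (f b)
      ≤ eVariationOn f (Icc a b ∩ Icc a s) + eVariationOn f (Icc a b ∩ Icc s b) := by
        gcongr
        · exact eVariationOn.edist_le f ⟨left_mem_Icc.2 (has.trans hsb), left_mem_Icc.2 has⟩
            ⟨hs, right_mem_Icc.2 has⟩
        · exact eVariationOn.edist_le f ⟨hs, left_mem_Icc.2 hsb⟩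
            ⟨right_mem_Icc.2 (has.trans hsb), right_mem_Icc.2 hsb⟩
    _ = eVariationOn f (Icc a b) := by
        rw [eVariationOn.Icc_add_Icc f has hsb hs, inter_self]

theorem totallyBounded_of_forall_subset_thickening {X : Type*} [PseudoMetricSpace X] {s : Set X}
    (h : ∀ ε > 0, ∃ t, TotallyBounded t ∧ s ⊆ thickening ε t) : TotallyBounded s := by
  rw [totallyBounded_iff]
  intro ε hε
  obtain ⟨t, ht, hst⟩ := h (ε / 2) (half_pos hε)
  obtain ⟨F, hF, htF⟩ := totallyBounded_iff.1 ht (ε / 2) (half_pos hε)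
  refine ⟨F, hF, fun z hz => ?_⟩
  obtain ⟨w, hw, hzw⟩ := mem_thickening_iff.1 (hst hz)
  obtain ⟨c, hc, hwc⟩ := mem_iUnion₂.1 (htF hw)
  rw [mem_ball] at hwc
  exact mem_iUnion₂.2 ⟨c, hc, mem_ball.2 (by linarith [dist_triangle z w c])⟩

def HasApproxIntermediatePoints (X : Type*) [PseudoMetricSpace X] : Prop :=
  ∀ (x z : X) (r ε : ℝ), 0 ≤ r → r ≤ dist x z → 0 < ε →
    ∃ w, dist x w = r ∧ dist w z < dist x z - r + ε

theorem hasApproxIntermediatePoints_of_lengthMetric_eq {X : Type*} [MetricSpace X]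
    (hlen : ∀ x y : X, lengthMetric x y = ENNReal.ofReal (dist x y)) :
    HasApproxIntermediatePoints X := by
  intro x z r ε hr hrz hε
  have hlt : lengthMetric x z < ENNReal.ofReal (dist x z + ε) := by
    rw [hlen, ENNReal.ofReal_lt_ofReal_iff (by positivity)]
    linarith
  rw [lengthMetric, iInf_lt_iff] at hlt
  obtain ⟨⟨σ, hσc, hσ0, hσ1, _⟩, hσ⟩ := hlt
  obtain ⟨s, hs, hsr⟩ : ∃ s ∈ Icc (0 : ℝ) 1, dist x (σ s) = r :=
    intermediate_value_Icc zero_le_one ((continuous_const.dist continuous_id).comp_continuousOn hσc)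
      (by simp [hσ0, hσ1, hr, hrz])
  refine ⟨σ s, hsr, ?_⟩
  have hsum : edist x (σ s) + edist (σ s) z < ENNReal.ofReal (dist x z + ε) := by
    calc edist x (σ s) + edist (σ s) z ≤ eVariationOn σ (Icc 0 1) := by
          simpa [hσ0, hσ1] using edist_add_edist_le_eVariationOn σ hs.1 hs.2
      _ < _ := hσ
  rw [edist_dist, edist_dist, ← ENNReal.ofReal_add dist_nonneg dist_nonneg,
    ENNReal.ofReal_lt_ofReal_iff_of_nonneg (by positivity)] at hsum
  linarith

section ApproxIntermediatePoints

variable {X : Type*} [PseudoMetricSpace X] (h : HasApproxIntermediatePoints X)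
include h

theorem HasApproxIntermediatePoints.closedBall_add_subset_cthickening (x : X) {r δ : ℝ}
    (hr : 0 ≤ r) (hδ : 0 ≤ δ) : closedBall x (r + δ) ⊆ cthickening δ (closedBall x r) := by
  intro z hz
  rw [mem_closedBall'] at hz
  rw [cthickening_eq_iInter_thickening hδ, mem_iInter₂]
  intro ε hε
  rw [mem_thickening_iff]
  by_cases hzr : dist x z ≤ r
  · exact ⟨z, mem_closedBall'.2 hzr, by simpa using hδ.trans_lt hε⟩
  · obtain ⟨w, hxw, hwz⟩ := h x z r (ε - δ) hr (le_of_not_ge hzr) (sub_pos.2 hε)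
    exact ⟨w, mem_closedBall'.2 hxw.le, by rw [dist_comm]; linarith⟩

theorem HasApproxIntermediatePoints.isCompact_closedBall_of_forall_lt [CompleteSpace X] (x : X)
    {b : ℝ} (hb : 0 < b) (H : ∀ s < b, IsCompact (closedBall x s)) :
    IsCompact (closedBall x b) := by
  refine (totallyBounded_of_forall_subset_thickening fun ε hε => ?_).isCompact_of_isClosed
    isClosed_closedBall
  set η := min (ε / 2) b
  have hη : 0 < η := lt_min (half_pos hε) hb
  refine ⟨closedBall x (b - η), (H _ (sub_lt_self b hη)).totallyBounded, ?_⟩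
  calc closedBall x b = closedBall x (b - η + η) := by rw [sub_add_cancel]
    _ ⊆ cthickening η (closedBall x (b - η)) :=
        h.closedBall_add_subset_cthickening x (sub_nonneg.2 (min_le_right _ _)) hη.le
    _ ⊆ thickening ε (closedBall x (b - η)) :=
        cthickening_subset_thickening' hε ((min_le_left _ _).trans_lt (half_lt_self hε)) _

theorem HasApproxIntermediatePoints.exists_isCompact_closedBall_add [LocallyCompactSpace X]
    (x : X) {b : ℝ} (hb : 0 ≤ b) (hK : IsCompact (closedBall x b)) :
    ∃ δ > 0, IsCompact (closedBall x (b + δ)) := by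
  obtain ⟨δ, hδ, hc⟩ := hK.exists_isCompact_cthickening
  exact ⟨δ, hδ, hc.of_isClosed_subset isClosed_closedBall
    (h.closedBall_add_subset_cthickening x hb hδ.le)⟩

theorem HasApproxIntermediatePoints.properSpace [CompleteSpace X] [LocallyCompactSpace X] :
    ProperSpace X := by
  refine ⟨fun x r => ?_⟩
  by_contra hr
  set S := {s : ℝ | IsCompact (closedBall x s)}
  have hdown {s s' : ℝ} (hs : s ∈ S) (hs' : s' ≤ s) : s' ∈ S :=
    IsCompact.of_isClosed_subset hs isClosed_closedBall (closedBall_subset_closedBall hs')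
  have hbdd : BddAbove S := ⟨r, fun s hs => le_of_not_gt fun hrs => hr (hdown hs hrs.le)⟩
  obtain ⟨δ, hδ, hδS⟩ := h.exists_isCompact_closedBall_add x le_rfl
    (by rw [closedBall_zero']; exact isCompact_singleton.closure)
  rw [zero_add] at hδS
  have hb : 0 < sSup S := hδ.trans_le (le_csSup hbdd hδS)
  have hbS : sSup S ∈ S := h.isCompact_closedBall_of_forall_lt x hb fun s hs =>
    let ⟨_, hs'S, hss'⟩ := exists_lt_of_lt_csSup ⟨δ, hδS⟩ hs
    hdown hs'S hss'.le
  obtain ⟨ε, hε, hεS⟩ := h.exists_isCompact_closedBall_add x hb.le hbS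
  linarith [le_csSup hbdd hεS]

theorem HasApproxIntermediatePoints.exists_midpoint [ProperSpace X] (a c : X) :
    ∃ m, dist a m ≤ dist a c / 2 ∧ dist m c ≤ dist a c / 2 := by
  have hr : 0 ≤ dist a c / 2 := by positivity
  have hrd : dist a c / 2 ≤ dist a c := half_le_self dist_nonneg
  obtain ⟨w, hw, -⟩ := h a c _ 1 hr hrd one_pos
  obtain ⟨m, hm, hmin⟩ := (isCompact_sphere a (dist a c / 2)).exists_isMinOn
    ⟨w, mem_sphere'.2 hw⟩ (continuous_id.dist continuous_const).continuousOn
  refine ⟨m, (mem_sphere'.1 hm).le, le_of_forall_pos_lt_add fun ε hε => ?_⟩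
  obtain ⟨w, hw, hwc⟩ := h a c _ ε hr hrd hε
  calc dist m c ≤ dist w c := hmin (mem_sphere'.2 hw)
    _ < dist a c - dist a c / 2 + ε := hwc
    _ = dist a c / 2 + ε := by ring

end ApproxIntermediatePoints

section Dyadic

variable {X : Type*} (m : X → X → X) (x y : X)

/-- `dyadicPoints m x y n i` is the point of parameter `i / 2 ^ n` on a path from `x` to `y`
built by repeatedly inserting `m`-midpoints. -/
def dyadicPoints : ℕ → ℕ → X
  | 0, i => if i = 0 then x else y
  | n + 1, i => if i % 2 = 0 then dyadicPoints n (i / 2)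
      else m (dyadicPoints n (i / 2)) (dyadicPoints n (i / 2 + 1))

@[simp]
theorem dyadicPoints_apply_zero (n : ℕ) : dyadicPoints m x y n 0 = x := by
  induction n with
  | zero => rfl
  | succ n ih => simpa [dyadicPoints] using ih

theorem dyadicPoints_succ_two_mul (n i : ℕ) :
    dyadicPoints m x y (n + 1) (2 * i) = dyadicPoints m x y n i := by
  simp [dyadicPoints]

theorem dyadicPoints_succ_two_mul_add_one (n i : ℕ) :
    dyadicPoints m x y (n + 1) (2 * i + 1) =
      m (dyadicPoints m x y n i) (dyadicPoints m x y n (i + 1)) := by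
  simp [dyadicPoints, Nat.add_div_of_dvd_right, Nat.add_mod]

@[simp]
theorem dyadicPoints_two_pow (n : ℕ) : dyadicPoints m x y n (2 ^ n) = y := by
  induction n with
  | zero => rfl
  | succ n ih => rw [pow_succ', dyadicPoints_succ_two_mul, ih]

noncomputable def dyadicApprox (n : ℕ) (t : ℝ) : X :=
  dyadicPoints m x y n ⌊t * 2 ^ n⌋₊

@[simp]
theorem dyadicApprox_zero (n : ℕ) : dyadicApprox m x y n 0 = x := by
  simp [dyadicApprox]

@[simp]
theorem dyadicApprox_one (n : ℕ) : dyadicApprox m x y n 1 = y := by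
  rw [dyadicApprox, one_mul, show (2 : ℝ) ^ n = ((2 ^ n : ℕ) : ℝ) by push_cast; rfl,
    Nat.floor_natCast, dyadicPoints_two_pow]

variable [PseudoMetricSpace X] {m}
  (hm : ∀ a c, dist a (m a c) ≤ dist a c / 2 ∧ dist (m a c) c ≤ dist a c / 2)
include hm

theorem dist_dyadicPoints_succ_le (n : ℕ) {i : ℕ} (hi : i < 2 ^ n) :
    dist (dyadicPoints m x y n i) (dyadicPoints m x y n (i + 1)) ≤ dist x y / 2 ^ n := by
  induction n generalizing i with
  | zero =>
    obtain rfl : i = 0 := by simpa using hi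
    simp [dyadicPoints]
  | succ n ih =>
    obtain ⟨k, rfl | rfl⟩ := Nat.even_or_odd' i
    · have hk : k < 2 ^ n := by rw [pow_succ'] at hi; omega
      calc _ = dist (dyadicPoints m x y n k) (m _ (dyadicPoints m x y n (k + 1))) := by
            rw [dyadicPoints_succ_two_mul, dyadicPoints_succ_two_mul_add_one]
        _ ≤ dist x y / 2 ^ n / 2 := (hm _ _).1.trans (by gcongr; exact ih hk)
        _ = dist x y / 2 ^ (n + 1) := by rw [pow_succ, div_div]
    · have hk : k < 2 ^ n := by rw [pow_succ'] at hi; omega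
      calc _ = dist (m (dyadicPoints m x y n k) _) (dyadicPoints m x y n (k + 1)) := by
            rw [dyadicPoints_succ_two_mul_add_one, show 2 * k + 1 + 1 = 2 * (k + 1) by ring,
              dyadicPoints_succ_two_mul]
        _ ≤ dist x y / 2 ^ n / 2 := (hm _ _).2.trans (by gcongr; exact ih hk)
        _ = dist x y / 2 ^ (n + 1) := by rw [pow_succ, div_div]

theorem dist_dyadicPoints_le (n : ℕ) {i j : ℕ} (hij : i ≤ j) (hj : j ≤ 2 ^ n) :
    dist (dyadicPoints m x y n i) (dyadicPoints m x y n j) ≤ dist x y * (j - i) / 2 ^ n := by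
  induction j, hij using Nat.le_induction with
  | base => simp
  | succ j hij ih =>
    calc _ ≤ dist (dyadicPoints m x y n i) (dyadicPoints m x y n j) +
          dist (dyadicPoints m x y n j) (dyadicPoints m x y n (j + 1)) := dist_triangle _ _ _
      _ ≤ dist x y * (j - i) / 2 ^ n + dist x y / 2 ^ n :=
          add_le_add (ih (by omega)) (dist_dyadicPoints_succ_le x y hm n (by omega))
      _ = dist x y * ((j + 1 : ℕ) - i) / 2 ^ n := by push_cast; ring

theorem dist_dyadicApprox_le {s t : ℝ} (hs : 0 ≤ s) (hst : s ≤ t) (ht : t ≤ 1) (n : ℕ) :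
    dist (dyadicApprox m x y n s) (dyadicApprox m x y n t) ≤
      dist x y * (t - s) + dist x y / 2 ^ n := by
  have h2n : (0 : ℝ) < 2 ^ n := by positivity
  calc _ ≤ dist x y * (⌊t * 2 ^ n⌋₊ - ⌊s * 2 ^ n⌋₊) / 2 ^ n :=
        dist_dyadicPoints_le x y hm n (Nat.floor_le_floor (by gcongr))
          (Nat.floor_le_of_le (by push_cast; exact mul_le_of_le_one_left h2n.le ht))
    _ ≤ dist x y * (t * 2 ^ n - (s * 2 ^ n - 1)) / 2 ^ n := by
        gcongr
        · exact Nat.floor_le (mul_nonneg (hs.trans hst) h2n.le)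
        · exact (Nat.sub_one_lt_floor _).le
    _ = dist x y * (t - s) + dist x y / 2 ^ n := by field_simp; ring

theorem dist_dyadicApprox_succ_le {t : ℝ} (ht₀ : 0 ≤ t) (ht₁ : t ≤ 1) (n : ℕ) :
    dist (dyadicApprox m x y n t) (dyadicApprox m x y (n + 1) t) ≤ dist x y / 2 / 2 ^ n := by
  set a := ⌊t * 2 ^ n⌋₊
  set b := ⌊t * 2 ^ (n + 1)⌋₊
  have hab : 2 * a ≤ b := Nat.le_floor (by
    push_cast; rw [pow_succ]; nlinarith [Nat.floor_le (by positivity : 0 ≤ t * 2 ^ n)])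
  have hba : b < 2 * a + 2 := (Nat.floor_lt (by positivity)).2 (by
    push_cast; rw [pow_succ]; linarith [Nat.lt_floor_add_one (t * 2 ^ n)])
  have hb : b ≤ 2 ^ (n + 1) :=
    Nat.floor_le_of_le (by push_cast; exact mul_le_of_le_one_left (by positivity) ht₁)
  calc _ = dist (dyadicPoints m x y (n + 1) (2 * a)) (dyadicPoints m x y (n + 1) b) := by
        rw [dyadicPoints_succ_two_mul]; rfl
    _ ≤ dist x y * (b - (2 * a : ℕ)) / 2 ^ (n + 1) := dist_dyadicPoints_le x y hm _ hab hb
    _ ≤ dist x y * 1 / 2 ^ (n + 1) := by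
        gcongr
        rw [sub_le_iff_le_add']
        exact_mod_cast Nat.le_of_lt_succ hba
    _ = dist x y / 2 / 2 ^ n := by rw [pow_succ]; ring

end Dyadic

theorem dist_eq_mul_abs_sub_of_dist_le {X : Type*} [PseudoMetricSpace X] {γ : ℝ → X} {x y : X}
    (h₀ : γ 0 = x) (h₁ : γ 1 = y)
    (hγ : ∀ s t, 0 ≤ s → s ≤ t → t ≤ 1 → dist (γ s) (γ t) ≤ dist x y * (t - s)) :
    ∀ s ∈ Icc (0 : ℝ) 1, ∀ t ∈ Icc (0 : ℝ) 1, dist (γ s) (γ t) = dist x y * |s - t| := by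
  have key (s t : ℝ) (hs : 0 ≤ s) (hst : s ≤ t) (ht : t ≤ 1) :
      dist (γ s) (γ t) = dist x y * (t - s) := by
    refine le_antisymm (hγ s t hs hst ht) ?_
    have hxs := hγ 0 s le_rfl hs (hst.trans ht)
    have hty := hγ t 1 (hs.trans hst) ht le_rfl
    rw [h₀] at hxs
    rw [h₁] at hty
    linarith [dist_triangle4 x (γ s) (γ t) y]
  intro s hs t ht
  rcases le_total s t with hst | hts
  · rw [key s t hs.1 hst ht.2, abs_sub_comm, abs_of_nonneg (sub_nonneg.2 hst)]
  · rw [dist_comm, key t s ht.1 hts hs.2, abs_of_nonneg (sub_nonneg.2 hts)]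

theorem exists_geodesic_of_exists_midpoint {X : Type*} [MetricSpace X] [CompleteSpace X]
    (h : ∀ a c : X, ∃ m, dist a m ≤ dist a c / 2 ∧ dist m c ≤ dist a c / 2) (x y : X) :
    ∃ γ : ℝ → X, γ 0 = x ∧ γ 1 = y ∧
      ∀ s ∈ Icc (0 : ℝ) 1, ∀ t ∈ Icc (0 : ℝ) 1, dist (γ s) (γ t) = dist x y * |s - t| := by
  choose m hm using h
  have : Nonempty X := ⟨x⟩
  set γ : ℝ → X := fun t => limUnder atTop (dyadicApprox m x y · t)
  have hγ (t : ℝ) (ht : t ∈ Icc (0 : ℝ) 1) :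
      Tendsto (dyadicApprox m x y · t) atTop (𝓝 (γ t)) :=
    (cauchySeq_of_le_geometric_two (dist_dyadicApprox_succ_le x y hm ht.1 ht.2)).tendsto_limUnder
  have h₀ : γ 0 = x := tendsto_nhds_unique (hγ 0 (left_mem_Icc.2 zero_le_one)) (by simp)
  have h₁ : γ 1 = y := tendsto_nhds_unique (hγ 1 (right_mem_Icc.2 zero_le_one)) (by simp)
  refine ⟨γ, h₀, h₁, dist_eq_mul_abs_sub_of_dist_le h₀ h₁ fun s t hs hst ht => ?_⟩
  have hlim : Tendsto (fun n : ℕ => dist x y * (t - s) + dist x y / 2 ^ n) atTop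
      (𝓝 (dist x y * (t - s))) := by
    simpa [div_eq_mul_inv] using tendsto_const_nhds.add
      ((tendsto_pow_atTop_nhds_zero_of_lt_one (by norm_num : (0 : ℝ) ≤ 2⁻¹)
        (by norm_num)).const_mul (dist x y))
  exact le_of_tendsto_of_tendsto' ((hγ s ⟨hs, hst.trans ht⟩).dist (hγ t ⟨hs.trans hst, ht⟩))
    hlim (dist_dyadicApprox_le x y hm hs hst ht)

/-- (Hopf–Rinow) A complete, locally compact length space is a geodesic space. -/
theorem hopf_rinow_geodesic {X : Type*} [MetricSpace X] [CompleteSpace X]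
    [LocallyCompactSpace X]
    (hlen : ∀ x y : X, lengthMetric x y = ENNReal.ofReal (dist x y)) :
    ∀ x y : X, ∃ γ : ℝ → X, γ 0 = x ∧ γ 1 = y ∧
      ∀ s ∈ Set.Icc (0:ℝ) 1, ∀ t ∈ Set.Icc (0:ℝ) 1,
        dist (γ s) (γ t) = dist x y * |s - t| := by
  have h := hasApproxIntermediatePoints_of_lengthMetric_eq hlen
  have : ProperSpace X := h.properSpace
  exact exists_geodesic_of_exists_midpoint h.exists_midpoint
end

section
/- In a geodesically convex neighborhood U of a metric space, the following are equivalent: (1) every geodesic triangle Δ(a,b,c) in U satisfies d(m,m') ≤ d(b,c)/2 where m,m' are midpoints of [a,b],[a,c]; (2) every pair of geodesics γ₁,γ₂:[0,1]→U parametrized proportionally to arc length satisfies d(γ₁(t),γ₂(t)) ≤ (1−t)d(γ₁(0),γ₂(0)) + t·d(γ₁(1),γ₂(1)) for all t∈[0,1]. -/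
open Set

/-!
A continuous midpoint-convex function on `[0, 1]` lies below its chord: otherwise, subtracting
the chord, midpoint convexity fails at the leftmost point where the positive maximum is attained.
Midpoint convexity of `t ↦ d(γ₁ t, γ₂ t)` between `s` and `t` is the midpoint inequality for the
two geodesics restricted to `[s, t]`. For geodesics with distinct starting points, that
inequality follows from the triangle inequality through the midpoint of a diagonal geodesic from
`γ₁ 0` to `γ₂ 1`, applying the common-start condition once at each end.
-/

/-- A geodesic `γ : [0,1] → X` parametrized proportionally to arc length and lying in `U`. -/
def IsGeodesicIn {X : Type*} [MetricSpace X] (U : Set X) (γ : ℝ → X) : Prop :=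
  (∀ t ∈ Set.Icc (0:ℝ) 1, γ t ∈ U) ∧
  ∃ lam : ℝ, ∀ s ∈ Set.Icc (0:ℝ) 1, ∀ t ∈ Set.Icc (0:ℝ) 1,
    dist (γ s) (γ t) = lam * |s - t|

def MidpointConvexOn (s : Set ℝ) (f : ℝ → ℝ) : Prop :=
  ∀ x ∈ s, ∀ y ∈ s, f ((x + y) / 2) ≤ (f x + f y) / 2

namespace MidpointConvexOn

variable {f : ℝ → ℝ}

theorem nonpos_of_continuousOn {a b : ℝ} (hf : MidpointConvexOn (Icc a b) f)
    (hc : ContinuousOn f (Icc a b)) (ha : f a ≤ 0) (hb : f b ≤ 0) :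
    ∀ t ∈ Icc a b, f t ≤ 0 := by
  by_contra! ⟨t, ht, hpos⟩
  obtain ⟨m, hm, hmax⟩ := isCompact_Icc.exists_isMaxOn ⟨t, ht⟩ hc
  -- At the leftmost maximiser `c`, midpoint convexity forces `c - ε` to be a maximiser too.
  set A := Icc a b ∩ f ⁻¹' {f m}
  have hA : IsCompact A := isCompact_Icc.of_isClosed_subset
    (hc.preimage_isClosed_of_isClosed isClosed_Icc isClosed_singleton) inter_subset_left
  obtain ⟨c, ⟨hc_mem, hc_max : f c = f m⟩, hc_least⟩ := hA.exists_isLeast ⟨m, hm, rfl⟩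
  have hfm : 0 < f m := hpos.trans_le (hmax ht)
  have hac : a < c := hc_mem.1.lt_of_ne (by rintro rfl; linarith)
  have hcb : c < b := hc_mem.2.lt_of_ne (by rintro rfl; linarith)
  set ε := min (c - a) (b - c)
  have hε : 0 < ε := lt_min (by linarith) (by linarith)
  have hleft : c - ε ∈ Icc a b := ⟨by linarith [min_le_left (c - a) (b - c)], by linarith⟩
  have hright : c + ε ∈ Icc a b := ⟨by linarith, by linarith [min_le_right (c - a) (b - c)]⟩
  have hmid := hf _ hleft _ hright
  rw [show (c - ε + (c + ε)) / 2 = c by ring, hc_max] at hmid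
  have hleft_max : f (c - ε) = f m := by
    linarith [isMaxOn_iff.mp hmax _ hleft, isMaxOn_iff.mp hmax _ hright]
  linarith [hc_least ⟨hleft, hleft_max⟩]

theorem le_chord_of_continuousOn (hf : MidpointConvexOn (Icc 0 1) f)
    (hc : ContinuousOn f (Icc 0 1)) :
    ∀ t ∈ Icc (0 : ℝ) 1, f t ≤ (1 - t) * f 0 + t * f 1 := by
  set g : ℝ → ℝ := fun t => f t - ((1 - t) * f 0 + t * f 1)
  have hg : MidpointConvexOn (Icc 0 1) g := fun x hx y hy => by
    simp only [g]
    linarith [hf x hx y hy]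
  have hg_cont : ContinuousOn g (Icc 0 1) := hc.sub (by fun_prop)
  intro t ht
  linarith [hg.nonpos_of_continuousOn hg_cont (by simp [g]) (by simp [g]) t ht]

end MidpointConvexOn

namespace IsGeodesicIn

variable {X : Type*} [MetricSpace X] {U : Set X} {γ : ℝ → X}

theorem continuousOn (h : IsGeodesicIn U γ) : ContinuousOn γ (Icc 0 1) := by
  obtain ⟨-, lam, hlam⟩ := h
  exact (LipschitzOnWith.of_dist_le' fun s hs t ht => by
    rw [hlam s hs t ht, Real.dist_eq]).continuousOn

theorem comp_affine (h : IsGeodesicIn U γ) {s t : ℝ} (hs : s ∈ Icc (0 : ℝ) 1)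
    (ht : t ∈ Icc (0 : ℝ) 1) : IsGeodesicIn U (fun u => γ (s + u * (t - s))) := by
  obtain ⟨hmem, lam, hlam⟩ := h
  have hmaps : ∀ u ∈ Icc (0 : ℝ) 1, s + u * (t - s) ∈ Icc (0 : ℝ) 1 := fun u hu =>
    ⟨by nlinarith [hu.1, hu.2, hs.1, ht.1], by nlinarith [hu.1, hu.2, hs.2, ht.2]⟩
  refine ⟨fun u hu => hmem _ (hmaps u hu), lam * |t - s|, fun u hu v hv => ?_⟩
  rw [hlam _ (hmaps u hu) _ (hmaps v hv),
    show s + u * (t - s) - (s + v * (t - s)) = (u - v) * (t - s) by ring, abs_mul]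
  ring

theorem reverse (h : IsGeodesicIn U γ) : IsGeodesicIn U (fun t => γ (1 - t)) := by
  simpa [sub_eq_add_neg] using h.comp_affine (s := 1) (t := 0) (by simp) (by simp)

end IsGeodesicIn

section Busemann

variable {X : Type*} [MetricSpace X] {U : Set X}

theorem dist_half_le_average
    (hconv : ∀ x ∈ U, ∀ y ∈ U, ∃ γ : ℝ → X, γ 0 = x ∧ γ 1 = y ∧ IsGeodesicIn U γ)
    (H : ∀ γ₁ γ₂ : ℝ → X, IsGeodesicIn U γ₁ → IsGeodesicIn U γ₂ → γ₁ 0 = γ₂ 0 →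
      dist (γ₁ (1/2)) (γ₂ (1/2)) ≤ dist (γ₁ 1) (γ₂ 1) / 2)
    {γ₁ γ₂ : ℝ → X} (h₁ : IsGeodesicIn U γ₁) (h₂ : IsGeodesicIn U γ₂) :
    dist (γ₁ (1/2)) (γ₂ (1/2)) ≤ (dist (γ₁ 0) (γ₂ 0) + dist (γ₁ 1) (γ₂ 1)) / 2 := by
  obtain ⟨σ, hσ0, hσ1, hσ⟩ :=
    hconv (γ₁ 0) (h₁.1 0 (by simp)) (γ₂ 1) (h₂.1 1 (by simp))
  have hstart : dist (γ₁ (1/2)) (σ (1/2)) ≤ dist (γ₁ 1) (γ₂ 1) / 2 := by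
    simpa [hσ1] using H γ₁ σ h₁ hσ hσ0.symm
  have hend : dist (γ₂ (1/2)) (σ (1/2)) ≤ dist (γ₂ 0) (γ₁ 0) / 2 := by
    simpa [hσ0, show (1 : ℝ) - 2⁻¹ = 2⁻¹ by norm_num]
      using H _ _ h₂.reverse hσ.reverse (by simp [hσ1])
  calc dist (γ₁ (1/2)) (γ₂ (1/2)) ≤ dist (γ₁ (1/2)) (σ (1/2)) + dist (γ₂ (1/2)) (σ (1/2)) :=
        dist_triangle_right _ _ _
    _ ≤ _ := by rw [dist_comm (γ₂ 0)] at hend; linarith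

theorem midpointConvexOn_dist
    (hconv : ∀ x ∈ U, ∀ y ∈ U, ∃ γ : ℝ → X, γ 0 = x ∧ γ 1 = y ∧ IsGeodesicIn U γ)
    (H : ∀ γ₁ γ₂ : ℝ → X, IsGeodesicIn U γ₁ → IsGeodesicIn U γ₂ → γ₁ 0 = γ₂ 0 →
      dist (γ₁ (1/2)) (γ₂ (1/2)) ≤ dist (γ₁ 1) (γ₂ 1) / 2)
    {γ₁ γ₂ : ℝ → X} (h₁ : IsGeodesicIn U γ₁) (h₂ : IsGeodesicIn U γ₂) :
    MidpointConvexOn (Icc 0 1) (fun t => dist (γ₁ t) (γ₂ t)) := by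
  intro s hs t ht
  simpa [show s + 2⁻¹ * (t - s) = (s + t) / 2 by ring]
    using dist_half_le_average hconv H (h₁.comp_affine hs ht) (h₂.comp_affine hs ht)

end Busemann

/-- In a geodesically convex neighborhood `U`, the midpoint condition for geodesic
triangles is equivalent to convexity of the metric along geodesics in `U`. -/
theorem busemann_midpoint_iff_convex {X : Type*} [MetricSpace X] (U : Set X)
    (hconv : ∀ x ∈ U, ∀ y ∈ U, ∃ γ : ℝ → X, γ 0 = x ∧ γ 1 = y ∧ IsGeodesicIn U γ) :
    (∀ γ₁ γ₂ : ℝ → X, IsGeodesicIn U γ₁ → IsGeodesicIn U γ₂ → γ₁ 0 = γ₂ 0 →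
      dist (γ₁ (1/2)) (γ₂ (1/2)) ≤ dist (γ₁ 1) (γ₂ 1) / 2) ↔
    (∀ γ₁ γ₂ : ℝ → X, IsGeodesicIn U γ₁ → IsGeodesicIn U γ₂ →
      ∀ t ∈ Set.Icc (0:ℝ) 1,
        dist (γ₁ t) (γ₂ t) ≤ (1 - t) * dist (γ₁ 0) (γ₂ 0) + t * dist (γ₁ 1) (γ₂ 1)) := by
  constructor
  · intro H γ₁ γ₂ h₁ h₂
    exact (midpointConvexOn_dist hconv H h₁ h₂).le_chord_of_continuousOn
      (continuous_dist.comp_continuousOn (h₁.continuousOn.prodMk h₂.continuousOn))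
  · intro H γ₁ γ₂ h₁ h₂ h₀
    have := H γ₁ γ₂ h₁ h₂ (1/2) (by norm_num)
    rw [h₀, dist_self] at this
    linarith
end

section
/- (Flat Strip Theorem) Let (X,d) be a CAT(0) space and γ₁,γ₂:ℝ→X two geodesic lines that are asymptotic, i.e., there is K with d(γ₁(t),γ₂(t)) ≤ K for all t∈ℝ. Then the convex hull of γ₁(ℝ) ∪ γ₂(ℝ) is isometric to a flat strip ℝ×[0,D] ⊆ E² for some D ≥ 0. -/
/-! Convexity of the distance function makes `t ↦ d(γ₁ t, γ₂ (t + a))` a bounded convex function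
on `ℝ`, hence constant. Shifting `γ₂` by a minimizer `a` of `a ↦ d(γ₁ 0, γ₂ a)`, the two lines
stay at constant distance `D`, realized at equal parameters. The CAT(0) form of Stewart's theorem
then forces `d(γ₁ t, γ₂ u)² = (u - t)² + D²`, and, applied to suitably chosen geodesics, shows
that the points at parameter `s` on the geodesics `[γ₁ t, γ₂ t]` again form a geodesic line at
distance `s D` from `γ₁`. Hence `(t, y) ↦` (the point at height `y` on `[γ₁ t, γ₂ t]`) embeds the
strip `ℝ × [0, D]` isometrically; its image is closed and convex, and by uniqueness of geodesics
it lies in every convex set containing both lines. -/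

open Set

/-- `γ : [0,1] → X` is a geodesic segment from `x` to `y`, parametrized proportionally
to arc length. -/
def IsGeodesicSeg {X : Type*} [MetricSpace X] (γ : ℝ → X) (x y : X) : Prop :=
  γ 0 = x ∧ γ 1 = y ∧
  ∀ s ∈ Set.Icc (0:ℝ) 1, ∀ t ∈ Set.Icc (0:ℝ) 1, dist (γ s) (γ t) = dist x y * |s - t|

/-- The Euclidean plane. -/
abbrev E2 := EuclideanSpace ℝ (Fin 2)

/-- The comparison point at parameter `t` on the Euclidean segment from `x'` to `y'`. -/
noncomputable def comparisonPt (x' y' : E2) (t : ℝ) : E2 := (1 - t) • x' + t • y'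

/-- `X` is a CAT(0) space: it is geodesic, and every geodesic triangle satisfies the
CAT(0) comparison inequality with respect to any Euclidean comparison triangle. -/
def CAT0 (X : Type*) [MetricSpace X] : Prop :=
  (∀ x y : X, ∃ γ : ℝ → X, IsGeodesicSeg γ x y) ∧
  ∀ (x y z : X) (γ₁ γ₂ γ₃ : ℝ → X),
    IsGeodesicSeg γ₁ x y → IsGeodesicSeg γ₂ y z → IsGeodesicSeg γ₃ x z →
    ∀ x' y' z' : E2,
      dist x' y' = dist x y → dist y' z' = dist y z → dist x' z' = dist x z →
      ∀ s ∈ Set.Icc (0:ℝ) 1, ∀ t ∈ Set.Icc (0:ℝ) 1,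
        dist (γ₁ s) (γ₁ t) ≤ dist (comparisonPt x' y' s) (comparisonPt x' y' t) ∧
        dist (γ₂ s) (γ₂ t) ≤ dist (comparisonPt y' z' s) (comparisonPt y' z' t) ∧
        dist (γ₃ s) (γ₃ t) ≤ dist (comparisonPt x' z' s) (comparisonPt x' z' t) ∧
        dist (γ₁ s) (γ₂ t) ≤ dist (comparisonPt x' y' s) (comparisonPt y' z' t) ∧
        dist (γ₁ s) (γ₃ t) ≤ dist (comparisonPt x' y' s) (comparisonPt x' z' t) ∧
        dist (γ₂ s) (γ₃ t) ≤ dist (comparisonPt y' z' s) (comparisonPt x' z' t)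

/-- `C` is geodesically convex. -/
def GeodConvex {X : Type*} [MetricSpace X] (C : Set X) : Prop :=
  ∀ x ∈ C, ∀ y ∈ C, ∃ γ : ℝ → X, IsGeodesicSeg γ x y ∧ ∀ t ∈ Set.Icc (0:ℝ) 1, γ t ∈ C

/-- The (closed) geodesically convex hull of `A`: the intersection of all closed
geodesically convex subsets containing `A`. -/
def geodConvexHull {X : Type*} [MetricSpace X] (A : Set X) : Set X :=
  ⋂₀ {C : Set X | IsClosed C ∧ GeodConvex C ∧ A ⊆ C}

open Filter Topology

namespace E2

theorem dist_sq_eq (x y : E2) : dist x y ^ 2 = (x 0 - y 0) ^ 2 + (x 1 - y 1) ^ 2 := by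
  rw [EuclideanSpace.dist_eq, Real.sq_sqrt (by positivity)]
  simp [Fin.sum_univ_two, Real.dist_eq, sq_abs]

theorem dist_eq_of_sq (x y : E2) {r : ℝ} (hr : 0 ≤ r)
    (h : (x 0 - y 0) ^ 2 + (x 1 - y 1) ^ 2 = r ^ 2) : dist x y = r := by
  rw [← pow_left_inj₀ dist_nonneg hr two_ne_zero, dist_sq_eq, h]

end E2

theorem exists_comparisonTriangle {X : Type*} [MetricSpace X] (x y z : X) :
    ∃ x' y' z' : E2, dist x' y' = dist x y ∧ dist y' z' = dist y z ∧ dist x' z' = dist x z := by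
  set a := dist x y
  set b := dist y z
  set c := dist x z
  have ha : 0 ≤ a := dist_nonneg
  have hc : 0 ≤ c := dist_nonneg
  have hb : 0 ≤ b := dist_nonneg
  have hab : c ≤ a + b := dist_triangle x y z
  have hbc : b ≤ a + c := by simpa only [dist_comm y x] using dist_triangle y x z
  have hca : a ≤ c + b := by simpa only [dist_comm z y] using dist_triangle x z y
  -- `z' = (p, q)` with `x' = 0`, `y' = (a, 0)`; when `a = 0` the junk value `p = 0` still works.
  set p := (a ^ 2 + c ^ 2 - b ^ 2) / (2 * a)
  have hp : 2 * a * p = a ^ 2 + c ^ 2 - b ^ 2 := by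
    rcases ha.eq_or_lt with ha0 | ha0
    · have : b = c := le_antisymm (by linarith) (by linarith)
      rw [← ha0, this]; ring
    · simp only [p]; field_simp
  have hpc : p ^ 2 ≤ c ^ 2 := by
    rcases ha.eq_or_lt with ha0 | ha0
    · simp [p, ← ha0, sq_nonneg]
    · have h4 : (2 * a) ^ 2 * p ^ 2 ≤ (2 * a) ^ 2 * c ^ 2 := by
        rw [← mul_pow, ← mul_pow, hp]
        nlinarith [mul_nonneg
          (mul_nonneg (by linarith : 0 ≤ a + b + c) (by linarith : 0 ≤ a + c - b))
          (mul_nonneg (by linarith : 0 ≤ a + b - c) (by linarith : 0 ≤ b + c - a))]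
      exact le_of_mul_le_mul_left h4 (by positivity)
  set q := Real.sqrt (c ^ 2 - p ^ 2)
  have hq : q ^ 2 = c ^ 2 - p ^ 2 := Real.sq_sqrt (by linarith)
  refine ⟨!₂[0, 0], !₂[a, 0], !₂[p, q], E2.dist_eq_of_sq _ _ ha ?_, E2.dist_eq_of_sq _ _ hb ?_,
    E2.dist_eq_of_sq _ _ hc ?_⟩ <;> simp <;> nlinarith

theorem dist_comparisonPt_sq (x p q : E2) (s : ℝ) :
    dist x (comparisonPt p q s) ^ 2 =
      (1 - s) * dist x p ^ 2 + s * dist x q ^ 2 - s * (1 - s) * dist p q ^ 2 := by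
  simp only [E2.dist_sq_eq, comparisonPt, PiLp.add_apply, PiLp.smul_apply, smul_eq_mul]
  ring

theorem dist_comparisonPt_same_start (a b c : E2) (u : ℝ) :
    dist (comparisonPt a b u) (comparisonPt a c u) = |u| * dist b c := by
  rw [dist_eq_norm, dist_eq_norm, ← Real.norm_eq_abs, ← norm_smul]
  congr 1
  simp only [comparisonPt]
  module

theorem dist_comparisonPt_same_end (a b c : E2) (u : ℝ) :
    dist (comparisonPt b c u) (comparisonPt a c u) = |1 - u| * dist b a := by
  rw [dist_eq_norm, dist_eq_norm, ← Real.norm_eq_abs, ← norm_smul]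
  congr 1
  simp only [comparisonPt]
  module

theorem ConvexOn.antitone_of_bddAbove {f : ℝ → ℝ} (hf : ConvexOn ℝ univ f)
    (hbdd : BddAbove (range f)) : Antitone f := by
  intro a b hab
  by_contra! hlt
  obtain ⟨K, hK⟩ := hbdd
  have hab : a < b := hab.lt_of_ne (by rintro rfl; exact hlt.false)
  set m := (f b - f a) / (b - a)
  have hm : 0 < m := div_pos (by linarith) (by linarith)
  have hfb : f b ≤ K := hK ⟨b, rfl⟩
  set z := b + (K - f b) / m + 1
  have hbz : b < z := by have : 0 ≤ (K - f b) / m := div_nonneg (by linarith) hm.le; linarith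
  -- past `b` the secant slopes stay `≥ m > 0`, so `f` grows beyond any bound
  have hslope : m ≤ (f z - f b) / (z - b) := hf.slope_mono_adjacent trivial trivial hab hbz
  rw [le_div_iff₀ (by linarith)] at hslope
  have : m * (z - b) = K - f b + m := by simp only [z]; field_simp; ring
  linarith [hK ⟨z, rfl⟩]

theorem ConvexOn.eq_of_bddAbove {f : ℝ → ℝ} (hf : ConvexOn ℝ univ f)
    (hbdd : BddAbove (range f)) (a b : ℝ) : f a = f b := by
  have hf' : ConvexOn ℝ univ (fun x => f (-x)) :=
    ⟨convex_univ, fun x _ y _ c d hc hd hcd => by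
      simpa [neg_add, smul_neg, add_comm] using hf.2 (mem_univ (-x)) (mem_univ (-y)) hc hd hcd⟩
  have hbdd' : BddAbove (range fun x => f (-x)) := by
    refine hbdd.mono ?_
    rintro _ ⟨x, rfl⟩
    exact ⟨-x, rfl⟩
  have h₁ := hf.antitone_of_bddAbove hbdd
  have h₂ := hf'.antitone_of_bddAbove hbdd'
  rcases le_total a b with hab | hab
  · exact le_antisymm (by simpa using h₂ (neg_le_neg hab)) (h₁ hab)
  · exact le_antisymm (h₁ hab) (by simpa using h₂ (neg_le_neg hab))

section Geodesic

variable {X : Type*} [MetricSpace X]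

theorem IsGeodesicSeg.dist_left {γ : ℝ → X} {x y : X} (hγ : IsGeodesicSeg γ x y)
    {s : ℝ} (hs : s ∈ Icc (0 : ℝ) 1) : dist x (γ s) = s * dist x y := by
  rw [← hγ.1, hγ.2.2 0 ⟨le_rfl, zero_le_one⟩ s hs, hγ.1, zero_sub, abs_neg, abs_of_nonneg hs.1,
    mul_comm]

theorem IsGeodesicSeg.dist_right {γ : ℝ → X} {x y : X} (hγ : IsGeodesicSeg γ x y)
    {s : ℝ} (hs : s ∈ Icc (0 : ℝ) 1) : dist (γ s) y = (1 - s) * dist x y := by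
  rw [← hγ.2.1, hγ.2.2 s hs 1 ⟨zero_le_one, le_rfl⟩, hγ.2.1, abs_sub_comm,
    abs_of_nonneg (sub_nonneg.2 hs.2), mul_comm]

theorem Isometry.isGeodesicSeg {α : ℝ → X} (hα : Isometry α) (t₀ t₁ : ℝ) :
    IsGeodesicSeg (fun u => α ((1 - u) * t₀ + u * t₁)) (α t₀) (α t₁) := by
  refine ⟨by simp, by simp, fun s _ t _ => ?_⟩
  simp only [hα.dist_eq, Real.dist_eq, ← abs_mul]
  rw [← abs_neg]
  congr 1
  ring

end Geodesic

/-- Geodesic lines `α`, `β` at distance `d`, parametrized so that `α t` and `β t` realize it. -/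
structure AlignedParallel {X : Type*} [MetricSpace X] (α β : ℝ → X) (d : ℝ) : Prop where
  isometry_left : Isometry α
  isometry_right : Isometry β
  dist_eq : ∀ t, dist (α t) (β t) = d
  le_dist : ∀ t u, d ≤ dist (α t) (β u)

theorem AlignedParallel.nonneg {X : Type*} [MetricSpace X] {α β : ℝ → X} {d : ℝ}
    (P : AlignedParallel α β d) : 0 ≤ d :=
  (P.dist_eq 0).symm ▸ dist_nonneg

namespace CAT0

variable {X : Type*} [MetricSpace X] (h : CAT0 X)
include h

noncomputable def geodesic (x y : X) : ℝ → X := (h.1 x y).choose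

theorem isGeodesicSeg_geodesic (x y : X) : IsGeodesicSeg (h.geodesic x y) x y :=
  (h.1 x y).choose_spec

variable {x y z : X} {s t : ℝ}

theorem dist_le_of_same_start {γ γ' : ℝ → X} (hγ : IsGeodesicSeg γ x y)
    (hγ' : IsGeodesicSeg γ' x z) {x' y' z' : E2} (hxy : dist x' y' = dist x y)
    (hyz : dist y' z' = dist y z) (hxz : dist x' z' = dist x z)
    (hs : s ∈ Icc (0 : ℝ) 1) (ht : t ∈ Icc (0 : ℝ) 1) :
    dist (γ s) (γ' t) ≤ dist (comparisonPt x' y' s) (comparisonPt x' z' t) :=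
  (h.2 x y z γ (h.geodesic y z) γ' hγ (h.isGeodesicSeg_geodesic y z) hγ' x' y' z' hxy hyz hxz
    s hs t ht).2.2.2.2.1

theorem dist_le_of_same_end {γ γ' : ℝ → X} (hγ : IsGeodesicSeg γ y z)
    (hγ' : IsGeodesicSeg γ' x z) {x' y' z' : E2} (hxy : dist x' y' = dist x y)
    (hyz : dist y' z' = dist y z) (hxz : dist x' z' = dist x z)
    (hs : s ∈ Icc (0 : ℝ) 1) (ht : t ∈ Icc (0 : ℝ) 1) :
    dist (γ s) (γ' t) ≤ dist (comparisonPt y' z' s) (comparisonPt x' z' t) :=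
  (h.2 x y z (h.geodesic x y) γ γ' (h.isGeodesicSeg_geodesic x y) hγ hγ' x' y' z' hxy hyz hxz
    s hs t ht).2.2.2.2.2

/-- The CAT(0) form of Stewart's theorem; for `s = 1/2` this is the CN inequality of
Bruhat–Tits. -/
theorem dist_sq_geodesicSeg_le {σ : ℝ → X} (hσ : IsGeodesicSeg σ y z) (x : X)
    (hs : s ∈ Icc (0 : ℝ) 1) :
    dist x (σ s) ^ 2 ≤ (1 - s) * dist x y ^ 2 + s * dist x z ^ 2 - s * (1 - s) * dist y z ^ 2 := by
  obtain ⟨y', x', z', hyx, hxz, hyz⟩ := exists_comparisonTriangle y x z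
  have hcomp := h.dist_le_of_same_start (h.isGeodesicSeg_geodesic y x) hσ hyx hxz hyz
    ⟨zero_le_one, le_rfl⟩ hs
  rw [(h.isGeodesicSeg_geodesic y x).2.1, comparisonPt, sub_self, zero_smul, one_smul,
    zero_add] at hcomp
  calc dist x (σ s) ^ 2 ≤ dist x' (comparisonPt y' z' s) ^ 2 := by gcongr
    _ = _ := by rw [dist_comparisonPt_sq, dist_comm x' y', dist_comm x y, hyx, hxz, hyz]

theorem apply_eq_of_dist_le {σ : ℝ → X} (hσ : IsGeodesicSeg σ x y) (hs : s ∈ Icc (0 : ℝ) 1)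
    {m : X} (hxm : dist x m ≤ s * dist x y) (hmy : dist m y ≤ (1 - s) * dist x y) : σ s = m := by
  have hxm2 : dist m x ^ 2 ≤ (s * dist x y) ^ 2 := by rw [dist_comm]; gcongr
  have hmy2 : dist m y ^ 2 ≤ ((1 - s) * dist x y) ^ 2 := by gcongr
  have hstew := h.dist_sq_geodesicSeg_le hσ m hs
  have : dist m (σ s) ^ 2 ≤ 0 := by
    nlinarith [mul_le_mul_of_nonneg_left hxm2 (sub_nonneg.2 hs.2),
      mul_le_mul_of_nonneg_left hmy2 hs.1]
  exact (dist_eq_zero.1 (pow_eq_zero_iff two_ne_zero |>.1 (le_antisymm this (sq_nonneg _)))).symm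

theorem geodesicSeg_unique {σ σ' : ℝ → X} (hσ : IsGeodesicSeg σ x y) (hσ' : IsGeodesicSeg σ' x y)
    (hs : s ∈ Icc (0 : ℝ) 1) : σ s = σ' s :=
  h.apply_eq_of_dist_le hσ hs (hσ'.dist_left hs).le (hσ'.dist_right hs).le

theorem dist_geodesicSeg_le {σ σ' : ℝ → X} {x' y' : X} (hσ : IsGeodesicSeg σ x y)
    (hσ' : IsGeodesicSeg σ' x' y') (hs : s ∈ Icc (0 : ℝ) 1) :
    dist (σ s) (σ' s) ≤ (1 - s) * dist x x' + s * dist y y' := by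
  set τ := h.geodesic x y'
  have hτ := h.isGeodesicSeg_geodesic x y'
  obtain ⟨a, b, c, hab, hbc, hac⟩ := exists_comparisonTriangle x y y'
  have h₁ : dist (σ s) (τ s) ≤ s * dist y y' := by
    simpa [dist_comparisonPt_same_start, abs_of_nonneg hs.1, hbc] using
      h.dist_le_of_same_start hσ hτ hab hbc hac hs hs
  obtain ⟨a', b', c', hab', hbc', hac'⟩ := exists_comparisonTriangle x x' y'
  have h₂ : dist (σ' s) (τ s) ≤ (1 - s) * dist x x' := by
    simpa [dist_comparisonPt_same_end, abs_of_nonneg (sub_nonneg.2 hs.2), dist_comm b' a', hab']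
      using h.dist_le_of_same_end hσ' hτ hab' hbc' hac' hs hs
  calc dist (σ s) (σ' s) ≤ dist (σ s) (τ s) + dist (σ' s) (τ s) := dist_triangle_right _ _ _
    _ ≤ _ := by linarith

theorem geodesic_mem {C : Set X} (hC : GeodConvex C) (hx : x ∈ C) (hy : y ∈ C)
    (hs : s ∈ Icc (0 : ℝ) 1) : h.geodesic x y s ∈ C := by
  obtain ⟨δ, hδ, hδC⟩ := hC x hx y hy
  rw [h.geodesicSeg_unique (h.isGeodesicSeg_geodesic x y) hδ hs]
  exact hδC s hs

theorem convexOn_dist_shift {α β : ℝ → X} (hα : Isometry α) (hβ : Isometry β) (a : ℝ) :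
    ConvexOn ℝ univ fun t => dist (α t) (β (t + a)) := by
  refine ⟨convex_univ, fun t₀ _ t₁ _ c e hc he hce => ?_⟩
  have hmem : e ∈ Icc (0 : ℝ) 1 := ⟨he, by linarith⟩
  have := h.dist_geodesicSeg_le (hα.isGeodesicSeg t₀ t₁) (hβ.isGeodesicSeg (t₀ + a) (t₁ + a)) hmem
  obtain rfl : c = 1 - e := by linarith
  have hlin : (1 - e) * t₀ + e * t₁ + a = (1 - e) * (t₀ + a) + e * (t₁ + a) := by ring
  simp only [smul_eq_mul, hlin]
  exact this

theorem dist_shift_eq {α β : ℝ → X} (hα : Isometry α) (hβ : Isometry β)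
    (hbdd : ∃ K, ∀ t, dist (α t) (β t) ≤ K) (a t : ℝ) :
    dist (α t) (β (t + a)) = dist (α 0) (β a) := by
  obtain ⟨K, hK⟩ := hbdd
  have hbdd' : BddAbove (range fun t => dist (α t) (β (t + a))) := by
    refine ⟨K + |a|, ?_⟩
    rintro _ ⟨t, rfl⟩
    calc dist (α t) (β (t + a)) ≤ dist (α t) (β t) + dist (β t) (β (t + a)) := dist_triangle _ _ _
      _ ≤ K + |a| := by
        rw [hβ.dist_eq, Real.dist_eq, sub_add_cancel_left, abs_neg]
        linarith [hK t]
  simpa using (h.convexOn_dist_shift hα hβ a).eq_of_bddAbove hbdd' t 0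

theorem exists_alignedParallel {α β : ℝ → X} (hα : Isometry α) (hβ : Isometry β)
    (hbdd : ∃ K, ∀ t, dist (α t) (β t) ≤ K) :
    ∃ a d, AlignedParallel α (fun t => β (t + a)) d := by
  have hcont : Continuous fun a => dist (α 0) (β a) := continuous_const.dist hβ.continuous
  have hcoercive : Tendsto (fun a => dist (α 0) (β a)) (cocompact ℝ) atTop := by
    refine tendsto_atTop_mono (fun a => ?_)
      (tendsto_atTop_add_const_right _ (-dist (α 0) (β 0)) tendsto_norm_cocompact_atTop)
    have := dist_triangle_left (β 0) (β a) (α 0)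
    rw [hβ.dist_eq, Real.dist_eq, zero_sub, abs_neg] at this
    simp only [Real.norm_eq_abs]
    linarith
  obtain ⟨a, ha⟩ := hcont.exists_forall_le hcoercive
  refine ⟨a, dist (α 0) (β a), hα, Isometry.of_dist_eq fun t u => by simp [hβ.dist_eq],
    fun t => ?_, fun t u => ?_⟩
  · exact h.dist_shift_eq hα hβ hbdd a t
  · have := h.dist_shift_eq hα hβ hbdd (u + a - t) t
    rw [add_sub_cancel] at this
    rw [this]
    exact ha _

end CAT0

theorem sub_le_dist_of_forall_dist_sq {X : Type*} [MetricSpace X] {p : ℝ → X} {x y : X}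
    {t t' c : ℝ} (hc : 0 ≤ c) (hx : ∀ u, dist (p u) x ^ 2 = (u - t) ^ 2 + c)
    (hy : ∀ u, dist (p u) y ^ 2 = (u - t') ^ 2 + c) : t' - t ≤ dist x y := by
  refine le_of_forall_pos_le_add fun ε hε => ?_
  -- at `u = t - m` the offset `c` costs at most `c / (2 m) = ε` on the way to `x`
  set m := c / (2 * ε)
  have hm : 0 ≤ m := by positivity
  have hmε : 2 * m * ε = c := by simp only [m]; field_simp
  have hpx : dist (p (t - m)) x ≤ m + ε :=
    le_of_sq_le_sq (by rw [hx]; nlinarith) (by linarith)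
  have hpy : t' - t + m ≤ dist (p (t - m)) y :=
    le_of_sq_le_sq (by rw [hy]; nlinarith) dist_nonneg
  linarith [dist_triangle (p (t - m)) x y]

namespace AlignedParallel

variable {X : Type*} [MetricSpace X] {α β : ℝ → X} {d : ℝ} (P : AlignedParallel α β d)
  (h : CAT0 X)
include P h

theorem sq_add_sq_le_dist_sq (t u : ℝ) : (u - t) ^ 2 + d ^ 2 ≤ dist (α t) (β u) ^ 2 := by
  have hσ := P.isometry_right.isGeodesicSeg t u
  have hββ : dist (β t) (β u) ^ 2 = (u - t) ^ 2 := by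
    rw [P.isometry_right.dist_eq, Real.dist_eq, sq_abs, ← neg_sub, neg_sq]
  -- `β t` is a nearest point of `β` to `α t`, so the comparison angle there is at least right
  have hnear : ∀ v ∈ Ioc (0 : ℝ) 1,
      (u - t) ^ 2 + d ^ 2 ≤ dist (α t) (β u) ^ 2 + v * (u - t) ^ 2 := by
    intro v hv
    have hstew := h.dist_sq_geodesicSeg_le hσ (α t) (Ioc_subset_Icc_self hv)
    have hmin : d ^ 2 ≤ dist (α t) (β ((1 - v) * t + v * u)) ^ 2 :=
      pow_le_pow_left₀ P.nonneg (P.le_dist _ _) 2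
    rw [P.dist_eq, hββ] at hstew
    nlinarith [hv.1]
  have hlim : Tendsto (fun v : ℝ => dist (α t) (β u) ^ 2 + v * (u - t) ^ 2) (𝓝[>] 0)
      (𝓝 (dist (α t) (β u) ^ 2)) := by
    have : Tendsto (fun v : ℝ => v * (u - t) ^ 2) (𝓝 0) (𝓝 0) := by
      simpa using (tendsto_id (x := 𝓝 (0 : ℝ))).mul_const ((u - t) ^ 2)
    simpa using (this.const_add _).mono_left nhdsWithin_le_nhds
  exact ge_of_tendsto hlim <| by
    filter_upwards [Ioc_mem_nhdsGT zero_lt_one] with v hv using hnear v hv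

theorem dist_sq (t u : ℝ) : dist (α t) (β u) ^ 2 = (u - t) ^ 2 + d ^ 2 := by
  refine le_antisymm ?_ (P.sq_add_sq_le_dist_sq h t u)
  set m := h.geodesic (α t) (β u) (1 / 2)
  have hσ := h.isGeodesicSeg_geodesic (α t) (β u)
  have hhalf : (1 / 2 : ℝ) ∈ Icc (0 : ℝ) 1 := by norm_num
  have hm₁ := h.dist_sq_geodesicSeg_le hσ (β t) hhalf
  have hm₂ := h.dist_sq_geodesicSeg_le hσ (α u) hhalf
  rw [dist_comm (β t) (α t), P.dist_eq, P.isometry_right.dist_eq, Real.dist_eq, sq_abs] at hm₁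
  rw [P.isometry_left.dist_eq, Real.dist_eq, sq_abs, P.dist_eq] at hm₂
  have hdiag := P.sq_add_sq_le_dist_sq h u t
  -- the CN inequality at `β t` and at `α u` bounds the other diagonal through the midpoint `m`
  have htri : dist (α u) (β t) ≤ dist (α u) m + dist (β t) m := dist_triangle_right _ _ _
  nlinarith [sq_nonneg (dist (α u) m - dist (β t) m), dist_nonneg (x := α u) (y := β t)]

theorem dist_sq_geodesic (u t : ℝ) {s : ℝ} (hs : s ∈ Icc (0 : ℝ) 1) :
    dist (α u) (h.geodesic (α t) (β t) s) ^ 2 = (u - t) ^ 2 + (s * d) ^ 2 := by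
  have hγ := h.isGeodesicSeg_geodesic (α t) (β t)
  rcases hs.1.eq_or_lt with rfl | hs₀
  · rw [hγ.1, P.isometry_left.dist_eq, Real.dist_eq, sq_abs]; ring
  -- the point at parameter `s` on the geodesic from `α u` to `β w`, with `w` chosen so that
  -- this point lies above `t`, is the point at parameter `s` from `α t` to `β t`
  set k := (t - u) / s
  have htk : t = u + s * k := by simp only [k]; field_simp; ring
  set w := u + k
  have hσ := h.isGeodesicSeg_geodesic (α u) (β w)
  have hαα : ∀ a b, dist (α a) (α b) ^ 2 = (a - b) ^ 2 := fun a b => by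
    rw [P.isometry_left.dist_eq, Real.dist_eq, sq_abs]
  have hββ : ∀ a b, dist (β a) (β b) ^ 2 = (a - b) ^ 2 := fun a b => by
    rw [P.isometry_right.dist_eq, Real.dist_eq, sq_abs]
  have h₁ := h.dist_sq_geodesicSeg_le hσ (α t) hs
  have h₂ := h.dist_sq_geodesicSeg_le hσ (β t) hs
  rw [hαα, P.dist_sq h, P.dist_sq h] at h₁
  rw [dist_comm (β t) (α u), P.dist_sq h, hββ, P.dist_sq h] at h₂
  have hm : h.geodesic (α t) (β t) s = h.geodesic (α u) (β w) s := by
    refine h.apply_eq_of_dist_le hγ hs ?_ ?_ <;> rw [P.dist_eq] <;>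
      refine le_of_sq_le_sq ?_ (mul_nonneg (by linarith [hs.2]) P.nonneg)
    · rw [htk] at h₁ ⊢; nlinarith
    · rw [dist_comm, htk]; rw [htk] at h₂; nlinarith
  rw [hm, hσ.dist_left hs, mul_pow, P.dist_sq h, htk]
  ring

theorem isometry_geodesic {s : ℝ} (hs : s ∈ Icc (0 : ℝ) 1) :
    Isometry fun t => h.geodesic (α t) (β t) s := by
  refine Isometry.of_dist_eq fun t t' => le_antisymm ?_ ?_
  · calc _ ≤ (1 - s) * dist (α t) (α t') + s * dist (β t) (β t') :=
          h.dist_geodesicSeg_le (h.isGeodesicSeg_geodesic _ _) (h.isGeodesicSeg_geodesic _ _) hs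
      _ = dist t t' := by rw [P.isometry_left.dist_eq, P.isometry_right.dist_eq]; ring
  · have hL : ∀ t u, dist (α u) (h.geodesic (α t) (β t) s) ^ 2 = (u - t) ^ 2 + (s * d) ^ 2 :=
      fun t u => P.dist_sq_geodesic h u t hs
    rw [Real.dist_eq, abs_sub_le_iff]
    constructor
    · rw [dist_comm]; exact sub_le_dist_of_forall_dist_sq (sq_nonneg _) (hL t') (hL t)
    · exact sub_le_dist_of_forall_dist_sq (sq_nonneg _) (hL t) (hL t')

theorem alignedParallel_geodesic {s s' : ℝ} (hs : s ∈ Icc (0 : ℝ) 1) (hs' : s' ∈ Icc (0 : ℝ) 1)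
    (hss' : s ≤ s') :
    AlignedParallel (fun t => h.geodesic (α t) (β t) s) (fun t => h.geodesic (α t) (β t) s')
      ((s' - s) * d) where
  isometry_left := P.isometry_geodesic h hs
  isometry_right := P.isometry_geodesic h hs'
  dist_eq t := by
    rw [(h.isGeodesicSeg_geodesic _ _).2.2 s hs s' hs', P.dist_eq, abs_sub_comm,
      abs_of_nonneg (sub_nonneg.2 hss'), mul_comm]
  le_dist t t' := by
    have := dist_triangle4 (α t) (h.geodesic (α t) (β t) s) (h.geodesic (α t') (β t') s') (β t')
    rw [(h.isGeodesicSeg_geodesic _ _).dist_left hs, (h.isGeodesicSeg_geodesic _ _).dist_right hs',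
      P.dist_eq, P.dist_eq] at this
    nlinarith [P.le_dist t t']

theorem dist_sq_geodesic_geodesic {s s' : ℝ} (hs : s ∈ Icc (0 : ℝ) 1) (hs' : s' ∈ Icc (0 : ℝ) 1)
    (t t' : ℝ) :
    dist (h.geodesic (α t) (β t) s) (h.geodesic (α t') (β t') s') ^ 2 =
      (t' - t) ^ 2 + ((s' - s) * d) ^ 2 := by
  rcases le_total s s' with hss' | hs's
  · exact (P.alignedParallel_geodesic h hs hs' hss').dist_sq h t t'
  · rw [dist_comm, (P.alignedParallel_geodesic h hs' hs hs's).dist_sq h t' t]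
    ring

end AlignedParallel

section Strip

variable {X : Type*} [MetricSpace X]

theorem Isometry.geodConvex_range {E : Type*} [NormedAddCommGroup E] [NormedSpace ℝ E]
    {S : Set E} (hS : Convex ℝ S) {f : S → X} (hf : Isometry f) : GeodConvex (range f) := by
  rintro _ ⟨v, rfl⟩ _ ⟨w, rfl⟩
  -- the straight segment from `v` to `w`, clamped to `[0, 1]` so that it stays inside `S`
  let c : ℝ → S := fun u =>
    ⟨AffineMap.lineMap v.1 w.1 (projIcc 0 1 zero_le_one u : ℝ),
      hS.lineMap_mem v.2 w.2 (projIcc 0 1 zero_le_one u).2⟩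
  refine ⟨f ∘ c, ⟨?_, ?_, fun s hs t ht => ?_⟩, fun u _ => mem_range_self (c u)⟩
  · simp [c]
  · simp [c]
  · simp only [Function.comp_apply, hf.dist_eq, Subtype.dist_eq, c, projIcc_of_mem _ hs,
      projIcc_of_mem _ ht, dist_lineMap_lineMap, Real.dist_eq, mul_comm]

theorem geodConvexHull_eq {A S : Set X} (hS : IsClosed S) (hSconv : GeodConvex S) (hAS : A ⊆ S)
    (hSC : ∀ C, GeodConvex C → A ⊆ C → S ⊆ C) : geodConvexHull A = S := by
  refine (sInter_subset_of_mem ?_).antisymm (subset_sInter fun C hC => hSC C hC.2.1 hC.2.2)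
  exact ⟨hS, hSconv, hAS⟩

theorem div_mem_Icc_zero_one {y d : ℝ} (hy : y ∈ Icc 0 d) : y / d ∈ Icc (0 : ℝ) 1 := by
  rcases hy.1.trans hy.2 |>.eq_or_lt with rfl | hd
  · simp
  · exact ⟨div_nonneg hy.1 hd.le, div_le_one_of_le₀ hy.2 hd.le⟩

/-- The height `v 1 ∈ [0, d]` becomes the geodesic parameter `v 1 / d`; for `d = 0` the junk
value `0` is harmless, as then `α = β`. -/
noncomputable def CAT0.stripMap (h : CAT0 X) (α β : ℝ → X) (d : ℝ) (v : E2) : X :=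
  h.geodesic (α (v 0)) (β (v 0)) (v 1 / d)

namespace AlignedParallel

variable {α β : ℝ → X} {d : ℝ} (P : AlignedParallel α β d) (h : CAT0 X)
include P h

theorem isometry_stripMap :
    Isometry fun v : {v : E2 // v 1 ∈ Icc (0 : ℝ) d} => h.stripMap α β d v := by
  refine Isometry.of_dist_eq fun v w => ?_
  have hscale : ∀ v : {v : E2 // v 1 ∈ Icc (0 : ℝ) d}, v.1 1 / d * d = v.1 1 := fun v =>
    div_mul_cancel_of_imp fun hd => le_antisymm (hd ▸ v.2.2) v.2.1
  rw [← pow_left_inj₀ dist_nonneg dist_nonneg two_ne_zero, CAT0.stripMap, CAT0.stripMap,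
    P.dist_sq_geodesic_geodesic h (div_mem_Icc_zero_one v.2) (div_mem_Icc_zero_one w.2),
    Subtype.dist_eq, E2.dist_sq_eq, sub_mul, hscale, hscale]
  ring

theorem range_stripMap :
    range (fun v : {v : E2 // v 1 ∈ Icc (0 : ℝ) d} => h.stripMap α β d v) =
      geodConvexHull (range α ∪ range β) := by
  have hstrip : IsClosed {v : E2 | v 1 ∈ Icc (0 : ℝ) d} :=
    isClosed_Icc.preimage (EuclideanSpace.proj (1 : Fin 2)).continuous
  have : CompleteSpace {v : E2 // v 1 ∈ Icc (0 : ℝ) d} := hstrip.completeSpace_coe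
  have hα : ∀ t, α t = h.stripMap α β d !₂[t, 0] := fun t => by
    simp [CAT0.stripMap, (h.isGeodesicSeg_geodesic _ _).1]
  have hβ : ∀ t, β t = h.stripMap α β d !₂[t, d] := fun t => by
    rcases P.nonneg.eq_or_lt with rfl | hd
    · simpa [CAT0.stripMap, (h.isGeodesicSeg_geodesic _ _).1] using
        (dist_eq_zero.1 (P.dist_eq t)).symm
    · simp [CAT0.stripMap, hd.ne', (h.isGeodesicSeg_geodesic _ _).2.1]
  have hiso := P.isometry_stripMap h
  have hconv : Convex ℝ {v : E2 | v 1 ∈ Icc (0 : ℝ) d} :=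
    (convex_Icc 0 d).linear_preimage (EuclideanSpace.projₗ 1)
  refine (geodConvexHull_eq hiso.isClosedEmbedding.isClosed_range
    (Isometry.geodConvex_range hconv hiso) ?_ ?_).symm
  · rintro _ (⟨t, rfl⟩ | ⟨t, rfl⟩)
    · exact ⟨⟨!₂[t, 0], by simp [P.nonneg]⟩, (hα t).symm⟩
    · exact ⟨⟨!₂[t, d], by simp [P.nonneg]⟩, (hβ t).symm⟩
  · rintro C hC hAC _ ⟨v, rfl⟩
    exact h.geodesic_mem hC (hAC (.inl ⟨_, rfl⟩)) (hAC (.inr ⟨_, rfl⟩)) (div_mem_Icc_zero_one v.2)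

end AlignedParallel

end Strip

/-- (Flat Strip Theorem) In a CAT(0) space, if two geodesic lines `γ₁, γ₂ : ℝ → X` are
asymptotic, then the convex hull of `γ₁(ℝ) ∪ γ₂(ℝ)` is isometric to a flat strip
`ℝ × [0,D] ⊆ E²`. -/
theorem cat0_flat_strip {X : Type*} [MetricSpace X] (h : CAT0 X)
    (γ₁ γ₂ : ℝ → X) (h₁ : Isometry γ₁) (h₂ : Isometry γ₂)
    (hasymp : ∃ K : ℝ, ∀ t : ℝ, dist (γ₁ t) (γ₂ t) ≤ K) :
    ∃ D : ℝ, 0 ≤ D ∧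
      Nonempty ({v : E2 // v 1 ∈ Set.Icc (0:ℝ) D} ≃ᵢ
        ↥(geodConvexHull (Set.range γ₁ ∪ Set.range γ₂))) := by
  obtain ⟨a, D, P⟩ := h.exists_alignedParallel h₁ h₂ hasymp
  have hrange : range (fun t => γ₂ (t + a)) = range γ₂ :=
    (Equiv.addRight a).surjective.range_comp γ₂
  refine ⟨D, P.nonneg, ?_⟩
  rw [← hrange, ← P.range_stripMap h]
  exact ⟨(P.isometry_stripMap h).isometryEquivOnRange⟩
end
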